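/- Let a group G act by isometries on metric spaces X and T, and let π : X → T be G-equivariant and 1-Lipschitz, i.e. π(g•x) = g•π(x) for all g ∈ G, x ∈ X, and d_T(π(a), π(b)) ≤ d_X(a, b) for all a, b ∈ X. Let g, h ∈ G, let x₀, y₀ ∈ X, and let λ_T > 0 be a real number such that d_T(π(x₀), g^m•π(x₀)) = |m|·λ_T for all m ∈ ℤ (π(x₀) lies on an axis of g in T with translation length λ_T), and suppose h•π(y₀) = π(y₀) (h fixes the projection of y₀, i.e. h is elliptic and y₀ projects to a fixed point of h). Set λ_X = d_X(x₀, g•x₀) and let ε > 0. Then for all integers l₁, l₂, n₁, n₂: if d_X(g^{l₁}•x₀, h^{n₁}•y₀) ≤ ε and d_X(g^{l₂}•x₀, h^{n₂}•y₀) ≤ ε, then d_X(h^{n₁}•y₀, h^{n₂}•y₀) ≤ 2ε + (2ε/λ_T)·λ_X. (This is the paper's lemma bounding the coarse intersection of the orbit A(g) = {g^l•x₀} with the orbit A(h) = {h^n•y₀} when g projects to a loxodromic element and h to an elliptic element; the bound depends only on ε, λ_T and λ_X.) -/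
import Mathlib

lemma dist_zpow_smul_le {G X : Type*} [Group G] [MetricSpace X] [MulAction G X]
    (hiso : ∀ (g : G) (a b : X), dist (g • a) (g • b) = dist a b)
    (g : G) (x : X) : ∀ m : ℤ, dist x (g ^ m • x) ≤ |(m : ℝ)| * dist x (g • x) := by
  have hnat : ∀ n : ℕ, dist x (g ^ n • x) ≤ (n : ℝ) * dist x (g • x) := by
    intro n
    induction n with
    | zero => simp
    | succ k ih =>
      have h1 : g ^ (k + 1) • x = g • (g ^ k • x) := by
        rw [pow_succ']; rw [mul_smul]
      calc dist x (g ^ (k + 1) • x)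
          ≤ dist x (g • x) + dist (g • x) (g ^ (k + 1) • x) := dist_triangle _ _ _
        _ = dist x (g • x) + dist x (g ^ k • x) := by rw [h1, hiso]
        _ ≤ dist x (g • x) + (k : ℝ) * dist x (g • x) := by linarith
        _ = ((k : ℝ) + 1) * dist x (g • x) := by ring
        _ = ((k + 1 : ℕ) : ℝ) * dist x (g • x) := by push_cast; ring
  intro m
  rcases le_or_gt 0 m with hm | hm
  · obtain ⟨n, rfl⟩ := Int.eq_ofNat_of_zero_le hm
    simpa [zpow_natCast, abs_of_nonneg (by positivity : (0:ℝ) ≤ (n:ℝ))] using hnat n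
  · obtain ⟨n, rfl⟩ : ∃ n : ℕ, m = -(n : ℤ) := ⟨m.natAbs, by omega⟩
    have key : dist x (g ^ (-(n : ℤ)) • x) = dist x (g ^ (n : ℤ) • x) := by
      have := hiso (g ^ (n : ℤ)) x (g ^ (-(n : ℤ)) • x)
      rw [← mul_smul, zpow_natCast] at this
      simp only [← zpow_natCast g n, ← zpow_add, add_neg_cancel, zpow_zero, one_smul] at this
      rw [← this, dist_comm]
    rw [key]
    simpa [zpow_natCast, abs_of_nonneg (by positivity : (0:ℝ) ≤ (n:ℝ))] using hnat n

/-- coarse-intersection bound for the orbit `{g^l • x₀}` over an axis of a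
loxodromic element `g` with the orbit `{h^n • y₀}` of a point projecting to a fixed point
of an elliptic element `h`, via a `G`-equivariant 1-Lipschitz map `π : X → T`. -/
theorem loxodromic_elliptic_intersection_bound
    {G X T : Type*} [Group G] [MetricSpace X] [MetricSpace T]
    [MulAction G X] [MulAction G T]
    (hisoX : ∀ (g : G) (a b : X), dist (g • a) (g • b) = dist a b)
    (hisoT : ∀ (g : G) (a b : T), dist (g • a) (g • b) = dist a b)
    (π : X → T)
    (hequiv : ∀ (g : G) (x : X), π (g • x) = g • π x)
    (hlip : ∀ a b : X, dist (π a) (π b) ≤ dist a b)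
    (g h : G) (x₀ y₀ : X)
    (lT : ℝ) (hlT : 0 < lT)
    (haxis : ∀ m : ℤ, dist (π x₀) ((g ^ m) • π x₀) = |(m : ℝ)| * lT)
    (hfix : h • π y₀ = π y₀)
    (ε : ℝ) (hε : 0 < ε) :
    ∀ l₁ l₂ n₁ n₂ : ℤ,
      dist (g ^ l₁ • x₀) (h ^ n₁ • y₀) ≤ ε →
      dist (g ^ l₂ • x₀) (h ^ n₂ • y₀) ≤ ε →
      dist (h ^ n₁ • y₀) (h ^ n₂ • y₀) ≤ 2 * ε + (2 * ε / lT) * dist x₀ (g • x₀) := by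
  intro l₁ l₂ n₁ n₂ h1 h2
  -- h^n fixes π y₀
  have hfixn : ∀ n : ℤ, h ^ n • π y₀ = π y₀ := by
    intro n
    have : h ∈ MulAction.stabilizer G (π y₀) := hfix
    exact (MulAction.stabilizer G (π y₀)).zpow_mem this n
  -- projected distances
  have proj : ∀ (l n : ℤ), dist (g ^ l • x₀) (h ^ n • y₀) ≤ ε →
      dist (g ^ l • π x₀) (π y₀) ≤ ε := by
    intro l n hd
    have := hlip (g ^ l • x₀) (h ^ n • y₀)
    rw [hequiv, hequiv, hfixn] at this
    exact this.trans hd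
  have p1 := proj l₁ n₁ h1
  have p2 := proj l₂ n₂ h2
  -- |l₂ - l₁| * lT ≤ 2ε
  have hT : |((l₂ - l₁ : ℤ) : ℝ)| * lT ≤ 2 * ε := by
    have e1 : dist (π x₀) (g ^ (l₂ - l₁) • π x₀) =
        dist (g ^ l₁ • π x₀) (g ^ l₂ • π x₀) := by
      rw [← hisoT (g ^ l₁) (π x₀) (g ^ (l₂ - l₁) • π x₀), ← mul_smul, ← zpow_add]
      congr 2
      ring
    have := haxis (l₂ - l₁)
    rw [e1] at this
    rw [← this]
    calc dist (g ^ l₁ • π x₀) (g ^ l₂ • π x₀)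
        ≤ dist (g ^ l₁ • π x₀) (π y₀) + dist (π y₀) (g ^ l₂ • π x₀) := dist_triangle _ _ _
      _ ≤ ε + ε := by rw [dist_comm (π y₀)]; linarith
      _ = 2 * ε := by ring
  have habs : |((l₂ - l₁ : ℤ) : ℝ)| ≤ 2 * ε / lT := by
    rw [le_div_iff₀ hlT]; exact hT
  -- X-distance between the g-orbit points
  have hX : dist (g ^ l₁ • x₀) (g ^ l₂ • x₀) ≤ (2 * ε / lT) * dist x₀ (g • x₀) := by
    have e1 : dist (g ^ l₁ • x₀) (g ^ l₂ • x₀) = dist x₀ (g ^ (l₂ - l₁) • x₀) := by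
      rw [← hisoX (g ^ l₁) x₀ (g ^ (l₂ - l₁) • x₀), ← mul_smul, ← zpow_add]
      congr 2
      ring
    rw [e1]
    calc dist x₀ (g ^ (l₂ - l₁) • x₀) ≤ |((l₂ - l₁ : ℤ) : ℝ)| * dist x₀ (g • x₀) :=
          dist_zpow_smul_le hisoX g x₀ (l₂ - l₁)
      _ ≤ (2 * ε / lT) * dist x₀ (g • x₀) :=
          mul_le_mul_of_nonneg_right habs dist_nonneg
  calc dist (h ^ n₁ • y₀) (h ^ n₂ • y₀)
      ≤ dist (h ^ n₁ • y₀) (g ^ l₁ • x₀) + dist (g ^ l₁ • x₀) (g ^ l₂ • x₀)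
        + dist (g ^ l₂ • x₀) (h ^ n₂ • y₀) := dist_triangle4 _ _ _ _
    _ ≤ ε + (2 * ε / lT) * dist x₀ (g • x₀) + ε := by
        rw [dist_comm (h ^ n₁ • y₀)]; linarith
    _ = 2 * ε + (2 * ε / lT) * dist x₀ (g • x₀) := by ring
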